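/- Let A be a commutative Noetherian ring and M a finitely generated A-module with Ass M = {P_1, …, P_r}. Then there exist positive integers k_1, …, k_r such that for every subset Y of Spec A stable under specialization, the ideal ∏_{i : P_i ∈ Y} P_i^{k_i} annihilates H_Y^0(M). -/

import Mathlib

open CategoryTheory PrimeSpectrum
open scoped TensorProduct

universe u

section BasicDefs

variable {A : Type u} [CommRing A]

/-- A subset `Z` of `Spec A` is stable under specialization. -/
def SpecStable (Z : Set (PrimeSpectrum A)) : Prop :=
  ∀ p ∈ Z, zeroLocus (p.asIdeal : Set A) ⊆ Z

/-- `H_Z^0(M) = {m ∈ M | Supp (A m) ⊆ Z}`, where `Supp (A m) = V(ann m)`. -/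
def zTorsion (Z : Set (PrimeSpectrum A)) (M : Type u) [AddCommGroup M] [Module A M] :
    Submodule A M where
  carrier := {m | zeroLocus (Ideal.torsionOf A M m : Set A) ⊆ Z}
  zero_mem' := by
    intro p hp
    rw [Ideal.torsionOf_zero] at hp
    exact (p.isPrime.ne_top ((Ideal.eq_top_iff_one _).mpr (hp Submodule.mem_top))).elim
  add_mem' := by
    intro m m' hm hm'
    refine subset_trans (subset_trans (zeroLocus_anti_mono_ideal ?_)
      (by rw [zeroLocus_inf])) (Set.union_subset hm hm')
    intro r hr
    obtain ⟨h1, h2⟩ := Submodule.mem_inf.mp hr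
    rw [Ideal.mem_torsionOf_iff] at h1 h2 ⊢
    rw [smul_add, h1, h2, add_zero]
  smul_mem' := by
    intro a m hm
    refine subset_trans (zeroLocus_anti_mono_ideal ?_) hm
    intro r hr
    rw [Ideal.mem_torsionOf_iff] at hr ⊢
    rw [smul_comm, hr, smul_zero]

/-- The functor `M ↦ H_Z^0(M)`. -/
noncomputable def zTorsionFunctor (Z : Set (PrimeSpectrum A)) :
    ModuleCat.{u} A ⥤ ModuleCat.{u} A where
  obj M := ModuleCat.of A (zTorsion Z M)
  map {M N} f := ModuleCat.ofHom (LinearMap.restrict f.hom (p := zTorsion Z M) (q := zTorsion Z N) (by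
    intro m hm
    refine subset_trans (zeroLocus_anti_mono_ideal ?_) hm
    intro r hr
    rw [Ideal.mem_torsionOf_iff] at hr ⊢
    rw [← map_smul, hr, map_zero]))
  map_id M := by ext x; rfl
  map_comp f g := by ext x; rfl

instance (Z : Set (PrimeSpectrum A)) : (zTorsionFunctor.{u} (A := A) Z).Additive where
  map_add := by intros; ext x; rfl

/-- The local cohomology functor `H_Z^p`, defined as the `p`-th right derived functor of
the functor `H_Z^0`. -/
noncomputable def localCohomologyZ (Z : Set (PrimeSpectrum A)) (p : ℕ) :
    ModuleCat.{u} A ⥤ ModuleCat.{u} A :=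
  (zTorsionFunctor Z).rightDerived p

end BasicDefs

section Heights

variable {R : Type*} [CommRing R]

/-- `ht (p/q)`: the supremum of lengths of chains of primes from `q` to `p`. -/
noncomputable def relHeight (q p : PrimeSpectrum R) : ℕ∞ :=
  sSup {n : ℕ∞ | ∃ c : LTSeries (PrimeSpectrum R),
    c.head = q ∧ c.last = p ∧ (c.length : ℕ∞) = n}

/-- The supremum of lengths of chains of primes inside `S` ending at `p`. -/
noncomputable def heightIn (S : Set (PrimeSpectrum R)) (p : PrimeSpectrum R) : ℕ∞ :=
  sSup {n : ℕ∞ | ∃ c : LTSeries (PrimeSpectrum R),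
    (∀ i, c.toFun i ∈ S) ∧ c.last = p ∧ (c.length : ℕ∞) = n}

/-- Comparison map from `ℕ∞` to `ℤ ∪ {∞}`. -/
def eZ (x : ℕ∞) : WithTop ℤ := x.map (fun n : ℕ => (n : ℤ))

end Heights

section ModuleHeights

variable (A : Type u) [CommRing A]

/-- `ht_M p = dim M_p`, the supremum of lengths of chains of primes in `Supp M` ending at `p`. -/
noncomputable def htM (M : Type u) [AddCommGroup M] [Module A M] (p : PrimeSpectrum A) : ℕ∞ :=
  heightIn (Module.support A M) p

/-- `ht_M b = inf { ht_M p | p ∈ Supp M ∩ V(b) }`. -/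
noncomputable def htMIdeal (M : Type u) [AddCommGroup M] [Module A M] (b : Ideal A) : ℕ∞ :=
  sInf (htM A M '' (Module.support A M ∩ zeroLocus (b : Set A)))

/-- The condition (QU). -/
def SatisfiesQU (M : Type u) [AddCommGroup M] [Module A M] : Prop :=
  ∀ p q : PrimeSpectrum A, p ∈ Module.support A M → q ∈ Module.support A M → q ≤ p →
    relHeight q p + htM A M q = htM A M p

end ModuleHeights

section Depth

variable {R : Type*} [CommRing R]

/-- The depth of a module `M` with respect to an ideal `I`: the supremum of lengths of weakly
regular sequences on `M` with entries in `I`.  (The zero module has depth `∞`.) -/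
noncomputable def idealDepth (I : Ideal R) (M : Type*) [AddCommGroup M] [Module R M] : ℕ∞ :=
  sSup {n : ℕ∞ | ∃ rs : List R, (∀ r ∈ rs, r ∈ I) ∧
    RingTheory.Sequence.IsWeaklyRegular M rs ∧ (rs.length : ℕ∞) = n}

end Depth

section LocalDepth

variable (A : Type u) [CommRing A]

/-- `depth M_q`: the depth of the localized module `M_q` over the local ring `A_q`. -/
noncomputable def primeDepth (q : PrimeSpectrum A) (M : Type u) [AddCommGroup M] [Module A M] :
    ℕ∞ :=
  idealDepth (IsLocalRing.maximalIdeal (Localization.AtPrime q.asIdeal))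
    (LocalizedModule q.asIdeal.primeCompl M)

/-- `A_P` is a Cohen–Macaulay local ring: its depth equals its dimension `ht P`. -/
def IsCMLocalizationAt (R : Type*) [CommRing R] (P : PrimeSpectrum R) : Prop :=
  idealDepth (IsLocalRing.maximalIdeal (Localization.AtPrime P.asIdeal))
    (Localization.AtPrime P.asIdeal) = Order.height P

/-- A Cohen–Macaulay ring: all localizations at primes are Cohen–Macaulay local rings. -/
def IsCMRing (R : Type*) [CommRing R] : Prop :=
  ∀ P : PrimeSpectrum R, IsCMLocalizationAt R P

end LocalDepth

section Conditions

variable (A : Type u) [CommRing A]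

/-- A saturated chain of primes: each step is a covering relation. -/
def IsSaturatedChain {R : Type*} [CommRing R] (c : LTSeries (PrimeSpectrum R)) : Prop :=
  ∀ i : Fin c.length, c.toFun i.castSucc ⋖ c.toFun i.succ

/-- A catenary ring: any two saturated chains of primes with the same endpoints have the
same length. -/
def IsCatenaryRing (R : Type*) [CommRing R] : Prop :=
  ∀ c₁ c₂ : LTSeries (PrimeSpectrum R), c₁.head = c₂.head → c₁.last = c₂.last →
    IsSaturatedChain c₁ → IsSaturatedChain c₂ → c₁.length = c₂.length

/-- (C1): `A` is universally catenary. -/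
def IsUniversallyCatenary : Prop :=
  ∀ (B : Type u) [CommRing B] [Algebra A B], Algebra.FiniteType A B → IsCatenaryRing B

/-- (C2): all formal fibers of all localizations of `A` are Cohen–Macaulay:
for every prime `p`, and every prime `q` of `A_p`, the fiber ring
`(A_p)^ ⊗_{A_p} κ(q)` is a Cohen–Macaulay ring, where `(A_p)^` is the completion of `A_p`
along its maximal ideal and `κ(q)` is the residue field of `A_p` at `q`. -/
def HasCMFormalFibers : Prop :=
  ∀ p : PrimeSpectrum A, ∀ q : PrimeSpectrum (Localization.AtPrime p.asIdeal),
    IsCMRing ((AdicCompletion (IsLocalRing.maximalIdeal (Localization.AtPrime p.asIdeal))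
        (Localization.AtPrime p.asIdeal))
      ⊗[Localization.AtPrime p.asIdeal]
      (IsLocalRing.ResidueField (Localization.AtPrime q.asIdeal)))

/-- (C3): the Cohen–Macaulay locus of every finitely generated `A`-algebra is open. -/
def HasOpenCMLoci : Prop :=
  ∀ (B : Type u) [CommRing B] [Algebra A B], Algebra.FiniteType A B →
    IsOpen {P : PrimeSpectrum B | IsCMLocalizationAt B P}

end Conditions

/-!
A prime containing the annihilator of `m ∈ H_Y^0(M)` contains a minimal prime over it; such a
prime is associated to `M` and lies in `Y`. Hence `H_Y^0(M) ⊆ H_{V_S}^0(M)`, where `V_S` is the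
union of the `V(P_i)` with `i ∈ S = {i | P_i ∈ Y}`. The module `H_{V_S}^0(M)` is finitely
generated with support in `V(∏_{i ∈ S} P_i)`, so a power of that product kills it. There are
only finitely many `S`, and the largest of these exponents works for every `Y`.
-/

section

variable {A : Type u} [CommRing A] {M : Type u} [AddCommGroup M] [Module A M]

lemma zTorsion_mono {Y Z : Set (PrimeSpectrum A)} (h : Y ⊆ Z) : zTorsion Y M ≤ zTorsion Z M :=
  fun _ hm => hm.trans h

lemma mem_associatedPrimes_of_mem_minimalPrimes_torsionOf [IsNoetherianRing A] (m : M)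
    {p : Ideal A} (hp : p ∈ (Ideal.torsionOf A M m).minimalPrimes) :
    p ∈ associatedPrimes A M := by
  rw [← Ideal.annihilator_span_singleton_eq_torsionOf] at hp
  exact associatedPrimes.subset_of_injective (A ∙ m).subtype_injective
    (Module.associatedPrimes.minimalPrimes_annihilator_subset_associatedPrimes A _ hp)

lemma zTorsion_le_zTorsion_associatedPrimes [IsNoetherianRing A] (Y : Set (PrimeSpectrum A)) :
    zTorsion Y M ≤
      zTorsion {q | ∃ p ∈ Y, p.asIdeal ∈ associatedPrimes A M ∧ p ≤ q} M := by
  intro m hm q hq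
  obtain ⟨p, hp, hpq⟩ := Ideal.exists_minimalPrimes_le (J := q.asIdeal) hq
  exact ⟨⟨p, hp.isPrime⟩, hm hp.1.2, mem_associatedPrimes_of_mem_minimalPrimes_torsionOf m hp, hpq⟩

lemma zeroLocus_annihilator_zTorsion_subset [IsNoetherianRing A] [Module.Finite A M]
    (Z : Set (PrimeSpectrum A)) :
    zeroLocus ((zTorsion Z M).annihilator : Set A) ⊆ Z := by
  intro q hq
  rw [← Module.support_eq_zeroLocus, Module.mem_support_iff_exists_annihilator] at hq
  obtain ⟨⟨m, hm⟩, hmq⟩ := hq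
  refine hm fun r hr => hmq ?_
  simpa [Submodule.mem_annihilator_span_singleton, Subtype.ext_iff] using hr

lemma exists_pow_le_annihilator_zTorsion [IsNoetherianRing A] [Module.Finite A M]
    {Z : Set (PrimeSpectrum A)} {J : Ideal A} (hZ : Z ⊆ zeroLocus J) :
    ∃ K : ℕ, J ^ K ≤ (zTorsion Z M).annihilator := by
  refine Ideal.exists_pow_le_of_le_radical_of_fg_radical ?_ (IsNoetherian.noetherian _)
  rw [← PrimeSpectrum.zeroLocus_subset_zeroLocus_iff]
  exact (zeroLocus_annihilator_zTorsion_subset Z).trans hZ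

end

open Classical in
theorem annihilator_of_zTorsion_general
    (A : Type u) [CommRing A] [IsNoetherianRing A]
    (M : Type u) [AddCommGroup M] [Module A M] [Module.Finite A M]
    (r : ℕ) (P : Fin r → PrimeSpectrum A)
    (hAss : associatedPrimes A M = Set.range fun i => (P i).asIdeal) :
    ∃ k : Fin r → ℕ, (∀ i, 0 < k i) ∧
      ∀ Y : Set (PrimeSpectrum A), SpecStable Y →
        ∀ c ∈ ∏ j ∈ Finset.univ.filter fun j => P j ∈ Y, (P j).asIdeal ^ k j,
          ∀ m ∈ zTorsion Y M, c • m = 0 := by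
  let V (S : Finset (Fin r)) : Set (PrimeSpectrum A) := {q | ∃ i ∈ S, P i ≤ q}
  have hV (S : Finset (Fin r)) : V S ⊆ zeroLocus (∏ j ∈ S, (P j).asIdeal : Ideal A) :=
    fun q ⟨i, hi, hiq⟩ => (Ideal.prod_le_inf.trans (Finset.inf_le hi)).trans hiq
  choose K hK using fun S => exists_pow_le_annihilator_zTorsion (M := M) (hV S)
  obtain ⟨k, hk⟩ := Finite.exists_le K
  refine ⟨fun _ => k + 1, fun _ => k.succ_pos, fun Y _ c hc m hm => ?_⟩
  set S := Finset.univ.filter fun j => P j ∈ Y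
  have hmS : m ∈ zTorsion (V S) M := by
    refine zTorsion_mono ?_ (zTorsion_le_zTorsion_associatedPrimes Y hm)
    rintro q ⟨p, hpY, hpAss, hpq⟩
    obtain ⟨i, hi⟩ := hAss ▸ hpAss
    obtain rfl : P i = p := PrimeSpectrum.ext hi
    exact ⟨i, Finset.mem_filter.mpr ⟨Finset.mem_univ i, hpY⟩, hpq⟩
  have hcS : c ∈ (zTorsion (V S) M).annihilator := by
    rw [Finset.prod_pow] at hc
    exact hK S (Ideal.pow_le_pow_right ((hk S).trans k.le_succ) hc)
  exact Submodule.mem_annihilator.mp hcS m hmS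

open Classical in
/-- For a finitely generated module `M` over a Noetherian ring with `Ass M = {P_1, …, P_r}`,
there are positive integers `k_1, …, k_r` such that for every specialization-stable `Y`,
the ideal `∏_{P_i ∈ Y} P_i^{k_i}` annihilates `H_Y^0(M)`. -/
theorem annihilator_of_zTorsion
    (A : Type u) [CommRing A] [IsNoetherianRing A]
    (M : Type u) [AddCommGroup M] [Module A M] [Module.Finite A M]
    (r : ℕ) (P : Fin r → PrimeSpectrum A) (hP : Function.Injective P)
    (hAss : associatedPrimes A M = Set.range fun i => (P i).asIdeal) :
    ∃ k : Fin r → ℕ, (∀ i, 0 < k i) ∧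
      ∀ Y : Set (PrimeSpectrum A), SpecStable Y →
        ∀ c ∈ ∏ j ∈ Finset.univ.filter fun j => P j ∈ Y, (P j).asIdeal ^ k j,
          ∀ m ∈ zTorsion Y M, c • m = 0 :=
  annihilator_of_zTorsion_general A M r P hAss
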